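/- arXiv:2306.10205 — 2 statements merged into one kernel-verified Lean document; each statement's English description precedes it below -/
import Mathlib

section
/- Let ψ be a Drinfeld twist for a commutative Hopf algebra O(H) over a field k, and set Q := Q_ψ = Σ S(ψ¹)ψ². Then Δ(Q) = (S⊗S)(ψ_{21}^{-1})·(Q⊗Q)·ψ^{-1}, where ψ_{21}^{-1} denotes the flip of the inverse of ψ. -/
open TensorProduct

/-- A Drinfeld twist for a commutative Hopf algebra `A` over `k`: an invertible element
`ψ ∈ A ⊗ A` satisfying `(Δ⊗id)(ψ)(ψ⊗1) = (id⊗Δ)(ψ)(1⊗ψ)` and `(ε⊗id)(ψ) = (id⊗ε)(ψ) = 1`. -/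
def IsDrinfeldTwist (k : Type*) {A : Type*} [CommSemiring k] [CommRing A]
    [HopfAlgebra k A] (ψ : A ⊗[k] A) : Prop :=
  IsUnit ψ ∧
  (Algebra.TensorProduct.assoc k k k A A A)
      ((LinearMap.rTensor A (Coalgebra.comul (R := k) (A := A))) ψ * (ψ ⊗ₜ[k] (1 : A)))
    = (LinearMap.lTensor A (Coalgebra.comul (R := k) (A := A))) ψ * ((1 : A) ⊗ₜ[k] ψ) ∧
  (TensorProduct.lid k A) ((LinearMap.rTensor A (Coalgebra.counit (R := k) (A := A))) ψ) = 1 ∧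
  (TensorProduct.rid k A) ((LinearMap.lTensor A (Coalgebra.counit (R := k) (A := A))) ψ) = 1

section ConvAux

open Coalgebra

variable {k C B : Type*} [CommSemiring k]
  [AddCommMonoid C] [Module k C] [Coalgebra k C]
  [Semiring B] [Algebra k B]

lemma sum_counit_smul' {a : C} {ι : Type*} (r : Coalgebra.Repr k a ι) :
    ∑ i ∈ r.index, Coalgebra.counit (R := k) (r.left i) • r.right i = a := by
  have h := Coalgebra.sum_counit_tmul_eq r
  apply_fun TensorProduct.lid k C at h
  simp only [map_sum, TensorProduct.lid_tmul, one_smul] at h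
  exact h

lemma sum_smul_counit' {a : C} {ι : Type*} (r : Coalgebra.Repr k a ι) :
    ∑ i ∈ r.index, Coalgebra.counit (R := k) (r.right i) • r.left i = a := by
  have h := Coalgebra.sum_tmul_counit_eq r
  apply_fun TensorProduct.rid k C at h
  simp only [map_sum, TensorProduct.rid_tmul, one_smul] at h
  exact h

/-- Convolution product on `Hom(C, B)`. -/
noncomputable def conv (f g : C →ₗ[k] B) : C →ₗ[k] B :=
  LinearMap.mul' k B ∘ₗ TensorProduct.map f g ∘ₗ Coalgebra.comul

/-- Convolution unit. -/
noncomputable def convUnit (k C B : Type*) [CommSemiring k]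
    [AddCommMonoid C] [Module k C] [Coalgebra k C] [Semiring B] [Algebra k B] :
    C →ₗ[k] B :=
  Algebra.linearMap k B ∘ₗ Coalgebra.counit

lemma conv_repr (f g : C →ₗ[k] B) {a : C} {ι : Type*} (r : Coalgebra.Repr k a ι) :
    conv f g a = ∑ i ∈ r.index, f (r.left i) * g (r.right i) := by
  simp only [conv, LinearMap.coe_comp, Function.comp_apply, ← r.eq, map_sum,
    TensorProduct.map_tmul, LinearMap.mul'_apply]

lemma conv_apply (f g : C →ₗ[k] B) (a : C) :
    conv f g a = ∑ i ∈ (ℛ k a).index, f ((ℛ k a).left i) * g ((ℛ k a).right i) :=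
  conv_repr f g (ℛ k a)

lemma convUnit_apply (a : C) :
    convUnit k C B a = algebraMap k B (Coalgebra.counit (R := k) a) := rfl

lemma conv_convUnit (f : C →ₗ[k] B) : conv f (convUnit k C B) = f := by
  ext a
  rw [conv_apply]
  have : ∀ i ∈ (ℛ k a).index,
      f ((ℛ k a).left i) * convUnit k C B ((ℛ k a).right i)
        = f (Coalgebra.counit (R := k) ((ℛ k a).right i) • (ℛ k a).left i) := by
    intro i _
    rw [convUnit_apply, ← Algebra.commutes, ← Algebra.smul_def, map_smul]
  rw [Finset.sum_congr rfl this, ← map_sum, sum_smul_counit']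

lemma convUnit_conv (g : C →ₗ[k] B) : conv (convUnit k C B) g = g := by
  ext a
  rw [conv_apply]
  have : ∀ i ∈ (ℛ k a).index,
      convUnit k C B ((ℛ k a).left i) * g ((ℛ k a).right i)
        = g (Coalgebra.counit (R := k) ((ℛ k a).left i) • (ℛ k a).right i) := by
    intro i _
    rw [convUnit_apply, ← Algebra.smul_def, map_smul]
  rw [Finset.sum_congr rfl this, ← map_sum, sum_counit_smul']

lemma conv_assoc (f g h : C →ₗ[k] B) : conv (conv f g) h = conv f (conv g h) := by
  ext a
  have key := Coalgebra.sum_map_tmul_tmul_eq (R := k) f g h a (repr := ℛ k a)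
    (a₁ := fun i => ℛ k ((ℛ k a).left i)) (a₂ := fun i => ℛ k ((ℛ k a).right i))
  apply_fun (LinearMap.mul' k B ∘ₗ LinearMap.lTensor B (LinearMap.mul' k B)) at key
  simp only [map_sum, LinearMap.coe_comp, Function.comp_apply, LinearMap.lTensor_tmul,
    LinearMap.mul'_apply] at key
  simp only [conv_apply, Finset.sum_mul, Finset.mul_sum, mul_assoc]
  exact key.symm

lemma conv_inv_unique {f x y : C →ₗ[k] B}
    (hx : conv f x = convUnit k C B) (hy : conv y f = convUnit k C B) : x = y := by
  have : conv y (conv f x) = conv (conv y f) x := (conv_assoc y f x).symm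
  rw [hx, hy, conv_convUnit, convUnit_conv] at this
  exact this.symm

end ConvAux


section HopfAux

open Coalgebra HopfAlgebra

variable {k A : Type*} [CommSemiring k] [CommRing A] [HopfAlgebra k A]


private lemma fac1 {A : Type*} [CommRing A] {ι κ : Type*} (s : Finset ι) (t : Finset κ) (c : A) (p u : ι → A) (q v : κ → A) :
    ∑ n ∈ t, ∑ j ∈ s, c * (p j * q n * (u j * v n))
      = c * ((∑ j ∈ s, p j * u j) * (∑ n ∈ t, q n * v n)) := by
  calc ∑ n ∈ t, ∑ j ∈ s, c * (p j * q n * (u j * v n))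
      = ∑ j ∈ s, ∑ n ∈ t, c * (p j * q n * (u j * v n)) := Finset.sum_comm
    _ = ∑ j ∈ s, ∑ n ∈ t, c * ((p j * u j) * (q n * v n)) :=
        Finset.sum_congr rfl fun j _ => Finset.sum_congr rfl fun n _ => by ring
    _ = c * ((∑ j ∈ s, p j * u j) * (∑ n ∈ t, q n * v n)) := by
        rw [Finset.sum_mul_sum, Finset.mul_sum]
        exact Finset.sum_congr rfl fun j _ => by rw [Finset.mul_sum]

lemma antipode_one' : antipode (R := k) (A := A) 1 = 1 := by
  have h := mul_antipode_rTensor_comul_apply (R := k) (A := A) 1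
  rw [Bialgebra.comul_one, Algebra.TensorProduct.one_def] at h
  simp only [LinearMap.rTensor_tmul, LinearMap.mul'_apply, mul_one, Bialgebra.counit_one,
    map_one] at h
  exact h

/-- Product of two representations. -/
noncomputable def reprMul {a b : A} {ι κ : Type*} (ra : Coalgebra.Repr k a ι)
    (rb : Coalgebra.Repr k b κ) :
    Coalgebra.Repr k (a * b) (ι × κ) where
  index := ra.index ×ˢ rb.index
  left p := ra.left p.1 * rb.left p.2
  right p := ra.right p.1 * rb.right p.2
  eq := by
    rw [Finset.sum_product]
    simp_rw [← Algebra.TensorProduct.tmul_mul_tmul]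
    rw [← Finset.sum_mul_sum, ra.eq, rb.eq, Bialgebra.comul_mul]

lemma antipode_mul' (a b : A) :
    antipode (R := k) (a * b) = antipode (R := k) (A := A) a * antipode (R := k) b := by
  set S : A →ₗ[k] A := antipode (R := k) (A := A) with hS
  set m : A ⊗[k] A →ₗ[k] A := LinearMap.mul' k A with hm
  set g : (A ⊗[k] (A ⊗[k] A)) ⊗[k] (A ⊗[k] (A ⊗[k] A)) →ₗ[k] A :=
    (m ∘ₗ LinearMap.lTensor A m) ∘ₗ
      TensorProduct.map (S ∘ₗ m) ((TensorProduct.map m (m ∘ₗ TensorProduct.map S S)) ∘ₗ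
        (TensorProduct.tensorTensorTensorComm k A A A A).toLinearMap) ∘ₗ
      (TensorProduct.tensorTensorTensorComm k A (A ⊗[k] A) A (A ⊗[k] A)).toLinearMap
    with hg
  have gapp : ∀ x y z u v w : A,
      g ((x ⊗ₜ[k] (y ⊗ₜ[k] z)) ⊗ₜ[k] (u ⊗ₜ[k] (v ⊗ₜ[k] w)))
        = S (x * u) * ((y * v) * (S z * S w)) := by
    intro x y z u v w
    simp [hg, hm, tensorTensorTensorComm_tmul, LinearMap.mul'_apply]
  set ra := ℛ k a with hra
  set rb := ℛ k b with hrb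
  set ra2 : ∀ i, Coalgebra.Repr k (ra.right i) (A × A) := fun i => ℛ k (ra.right i) with hra2
  set la2 : ∀ i, Coalgebra.Repr k (ra.left i) (A × A) := fun i => ℛ k (ra.left i) with hla2
  set rb2 : ∀ i, Coalgebra.Repr k (rb.right i) (A × A) := fun i => ℛ k (rb.right i) with hrb2
  set lb2 : ∀ i, Coalgebra.Repr k (rb.left i) (A × A) := fun i => ℛ k (rb.left i) with hlb2
  have keyA := Coalgebra.sum_tmul_tmul_eq ra la2 ra2
  have keyB := Coalgebra.sum_tmul_tmul_eq rb lb2 rb2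
  have hE : g ((∑ i ∈ ra.index, ∑ j ∈ (la2 i).index,
        (la2 i).left j ⊗ₜ[k] ((la2 i).right j ⊗ₜ[k] ra.right i)) ⊗ₜ[k]
      (∑ i ∈ rb.index, ∑ j ∈ (lb2 i).index,
        (lb2 i).left j ⊗ₜ[k] ((lb2 i).right j ⊗ₜ[k] rb.right i)))
      = g ((∑ i ∈ ra.index, ∑ j ∈ (ra2 i).index,
        ra.left i ⊗ₜ[k] ((ra2 i).left j ⊗ₜ[k] (ra2 i).right j)) ⊗ₜ[k]
      (∑ i ∈ rb.index, ∑ j ∈ (rb2 i).index,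
        rb.left i ⊗ₜ[k] ((rb2 i).left j ⊗ₜ[k] (rb2 i).right j))) := by
    rw [keyA, keyB]
  -- expand both sides into quadruple sums
  simp only [TensorProduct.sum_tmul, TensorProduct.tmul_sum, map_sum, gapp] at hE
  have hR : ∑ m ∈ rb.index, ∑ n ∈ (rb2 m).index, ∑ i ∈ ra.index, ∑ j ∈ (ra2 i).index,
      S (ra.left i * rb.left m) *
        ((ra2 i).left j * (rb2 m).left n * (S ((ra2 i).right j) * S ((rb2 m).right n)))
      = S (a * b) := by
    calc ∑ m ∈ rb.index, ∑ n ∈ (rb2 m).index, ∑ i ∈ ra.index, ∑ j ∈ (ra2 i).index,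
        S (ra.left i * rb.left m) *
          ((ra2 i).left j * (rb2 m).left n * (S ((ra2 i).right j) * S ((rb2 m).right n)))
        = ∑ m ∈ rb.index, ∑ i ∈ ra.index, ∑ n ∈ (rb2 m).index, ∑ j ∈ (ra2 i).index,
          S (ra.left i * rb.left m) *
            ((ra2 i).left j * (rb2 m).left n * (S ((ra2 i).right j) * S ((rb2 m).right n))) :=
          Finset.sum_congr rfl fun m _ => Finset.sum_comm
      _ = ∑ m ∈ rb.index, ∑ i ∈ ra.index, S (ra.left i * rb.left m) *
            ((Coalgebra.counit (R := k) (ra.right i) • (1:A)) *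
             (Coalgebra.counit (R := k) (rb.right m) • (1:A))) := by
          refine Finset.sum_congr rfl fun m _ => Finset.sum_congr rfl fun i _ => ?_
          rw [fac1, sum_mul_antipode_eq_smul (ra2 i), sum_mul_antipode_eq_smul (rb2 m)]
      _ = ∑ m ∈ rb.index, ∑ i ∈ ra.index,
            S ((Coalgebra.counit (R := k) (ra.right i) • ra.left i) *
               (Coalgebra.counit (R := k) (rb.right m) • rb.left m)) := by
          refine Finset.sum_congr rfl fun m _ => Finset.sum_congr rfl fun i _ => ?_
          rw [smul_mul_smul_comm, smul_mul_smul_comm, mul_one, mul_smul_comm, mul_one, map_smul]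
      _ = S (a * b) := by
          simp_rw [← map_sum]
          congr 1
          have hprod : ∑ m ∈ rb.index, ∑ i ∈ ra.index,
              (Coalgebra.counit (R := k) (ra.right i) • ra.left i) *
                (Coalgebra.counit (R := k) (rb.right m) • rb.left m)
              = (∑ i ∈ ra.index, Coalgebra.counit (R := k) (ra.right i) • ra.left i) *
                (∑ m ∈ rb.index, Coalgebra.counit (R := k) (rb.right m) • rb.left m) := by
            rw [Finset.sum_mul_sum]
            exact Finset.sum_comm
          rw [hprod, sum_smul_counit' ra, sum_smul_counit' rb]
  have hL : ∑ m ∈ rb.index, ∑ n ∈ (lb2 m).index, ∑ i ∈ ra.index, ∑ j ∈ (la2 i).index,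
      S ((la2 i).left j * (lb2 m).left n) *
        ((la2 i).right j * (lb2 m).right n * (S (ra.right i) * S (rb.right m)))
      = S a * S b := by
    calc ∑ m ∈ rb.index, ∑ n ∈ (lb2 m).index, ∑ i ∈ ra.index, ∑ j ∈ (la2 i).index,
        S ((la2 i).left j * (lb2 m).left n) *
          ((la2 i).right j * (lb2 m).right n * (S (ra.right i) * S (rb.right m)))
        = ∑ m ∈ rb.index, ∑ i ∈ ra.index, ∑ n ∈ (lb2 m).index, ∑ j ∈ (la2 i).index,
          S ((la2 i).left j * (lb2 m).left n) *
            ((la2 i).right j * (lb2 m).right n * (S (ra.right i) * S (rb.right m))) :=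
          Finset.sum_congr rfl fun m _ => Finset.sum_comm
      _ = ∑ m ∈ rb.index, ∑ i ∈ ra.index,
            (Coalgebra.counit (R := k) (ra.left i * rb.left m) • (1:A)) *
              (S (ra.right i) * S (rb.right m)) := by
          refine Finset.sum_congr rfl fun m _ => Finset.sum_congr rfl fun i _ => ?_
          have base := sum_antipode_mul_eq_smul (R := k) (reprMul (la2 i) (lb2 m))
          simp only [reprMul, Finset.sum_product] at base
          have expand : ∀ n ∈ (lb2 m).index, ∀ j ∈ (la2 i).index,
              S ((la2 i).left j * (lb2 m).left n) *
                ((la2 i).right j * (lb2 m).right n * (S (ra.right i) * S (rb.right m)))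
              = (S ((la2 i).left j * (lb2 m).left n) *
                  ((la2 i).right j * (lb2 m).right n)) *
                  (S (ra.right i) * S (rb.right m)) := fun _ _ _ _ => by ring
          rw [Finset.sum_congr rfl fun n hn => Finset.sum_congr rfl fun j hj =>
            expand n hn j hj]
          simp_rw [← Finset.sum_mul]
          rw [Finset.sum_comm, base]
      _ = ∑ m ∈ rb.index, ∑ i ∈ ra.index,
            (Coalgebra.counit (R := k) (ra.left i) • S (ra.right i)) *
              (Coalgebra.counit (R := k) (rb.left m) • S (rb.right m)) := by
          refine Finset.sum_congr rfl fun m _ => Finset.sum_congr rfl fun i _ => ?_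
          rw [Bialgebra.counit_mul, smul_mul_assoc, one_mul, smul_mul_smul_comm]
      _ = S a * S b := by
          have ha : ∑ i ∈ ra.index, Coalgebra.counit (R := k) (ra.left i) • S (ra.right i)
              = S a := by
            calc ∑ i ∈ ra.index, Coalgebra.counit (R := k) (ra.left i) • S (ra.right i)
                = ∑ i ∈ ra.index, S (Coalgebra.counit (R := k) (ra.left i) • ra.right i) :=
                  Finset.sum_congr rfl fun i _ => (map_smul S _ _).symm
              _ = S (∑ i ∈ ra.index, Coalgebra.counit (R := k) (ra.left i) • ra.right i) :=
                  (map_sum S _ _).symm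
              _ = S a := by rw [sum_counit_smul' ra]
          have hb : ∑ m ∈ rb.index, Coalgebra.counit (R := k) (rb.left m) • S (rb.right m)
              = S b := by
            calc ∑ m ∈ rb.index, Coalgebra.counit (R := k) (rb.left m) • S (rb.right m)
                = ∑ m ∈ rb.index, S (Coalgebra.counit (R := k) (rb.left m) • rb.right m) :=
                  Finset.sum_congr rfl fun m _ => (map_smul S _ _).symm
              _ = S (∑ m ∈ rb.index, Coalgebra.counit (R := k) (rb.left m) • rb.right m) :=
                  (map_sum S _ _).symm
              _ = S b := by rw [sum_counit_smul' rb]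
          have hprod : ∑ m ∈ rb.index, ∑ i ∈ ra.index,
              (Coalgebra.counit (R := k) (ra.left i) • S (ra.right i)) *
                (Coalgebra.counit (R := k) (rb.left m) • S (rb.right m))
              = (∑ i ∈ ra.index, Coalgebra.counit (R := k) (ra.left i) • S (ra.right i)) *
                (∑ m ∈ rb.index, Coalgebra.counit (R := k) (rb.left m) • S (rb.right m)) := by
            rw [Finset.sum_mul_sum]
            exact Finset.sum_comm
          rw [hprod, ha, hb]
  exact hR.symm.trans (hE.symm.trans hL)


/-- The antipode of a commutative Hopf algebra, as an algebra hom. -/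
noncomputable def antipodeAlgHom' (k A : Type*) [CommSemiring k] [CommRing A]
    [HopfAlgebra k A] : A →ₐ[k] A :=
  AlgHom.ofLinearMap (antipode (R := k) (A := A)) antipode_one' antipode_mul'

lemma lemX {c : A} {ι κ : Type*} (ρ : Coalgebra.Repr k c ι)
    (σ : ∀ j, Coalgebra.Repr k (ρ.left j) κ) :
    ∑ j ∈ ρ.index, ∑ p ∈ (σ j).index,
      (σ j).left p ⊗ₜ[k] ((σ j).right p * antipode (R := k) (ρ.right j))
      = c ⊗ₜ[k] (1 : A) := by
  set σ' : ∀ j, Coalgebra.Repr k (ρ.right j) (A × A) := fun j => ℛ k (ρ.right j) with hσ'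
  have key := Coalgebra.sum_tmul_tmul_eq ρ σ σ'
  apply_fun LinearMap.lTensor A
    (LinearMap.mul' k A ∘ₗ LinearMap.lTensor A (antipode (R := k))) at key
  simp only [map_sum, LinearMap.lTensor_tmul, LinearMap.coe_comp, Function.comp_apply,
    LinearMap.mul'_apply] at key
  rw [key]
  have step : ∀ j ∈ ρ.index, ∑ p ∈ (σ' j).index,
      ρ.left j ⊗ₜ[k] ((σ' j).left p * antipode (R := k) ((σ' j).right p))
      = Coalgebra.counit (R := k) (ρ.right j) • (ρ.left j ⊗ₜ[k] (1 : A)) := by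
    intro j _
    rw [← TensorProduct.tmul_sum, sum_mul_antipode_eq_smul (σ' j), tmul_smul]
  rw [Finset.sum_congr rfl step]
  simp_rw [TensorProduct.smul_tmul']
  rw [← TensorProduct.sum_tmul, sum_smul_counit' ρ]

lemma lemG {c : A} {ι : Type*} (ρ : Coalgebra.Repr k c ι) :
    ∑ j ∈ ρ.index, ((antipode (R := k) (ρ.left j)) ⊗ₜ[k] (1 : A)) *
        Coalgebra.comul (R := k) (ρ.right j)
      = (1 : A) ⊗ₜ[k] c := by
  set σ : ∀ j, Coalgebra.Repr k (ρ.left j) (A × A) := fun j => ℛ k (ρ.left j) with hσ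
  set σ' : ∀ j, Coalgebra.Repr k (ρ.right j) (A × A) := fun j => ℛ k (ρ.right j) with hσ'
  have expand : ∀ j ∈ ρ.index,
      ((antipode (R := k) (ρ.left j)) ⊗ₜ[k] (1 : A)) * Coalgebra.comul (R := k) (ρ.right j)
      = ∑ p ∈ (σ' j).index,
          (antipode (R := k) (ρ.left j) * (σ' j).left p) ⊗ₜ[k] ((σ' j).right p) := by
    intro j _
    rw [← (σ' j).eq, Finset.mul_sum]
    exact Finset.sum_congr rfl fun p _ => by
      rw [Algebra.TensorProduct.tmul_mul_tmul, one_mul]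
  rw [Finset.sum_congr rfl expand]
  have key := Coalgebra.sum_tmul_tmul_eq ρ σ σ'
  apply_fun (LinearMap.rTensor A
      (LinearMap.mul' k A ∘ₗ LinearMap.rTensor A (antipode (R := k)))
      ∘ₗ (TensorProduct.assoc k A A A).symm.toLinearMap) at key
  simp only [map_sum, LinearMap.coe_comp, LinearEquiv.coe_coe, Function.comp_apply,
    TensorProduct.assoc_symm_tmul, LinearMap.rTensor_tmul, LinearMap.mul'_apply] at key
  rw [← key]
  have step : ∀ j ∈ ρ.index, ∑ p ∈ (σ j).index,
      (antipode (R := k) ((σ j).left p) * (σ j).right p) ⊗ₜ[k] ρ.right j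
      = Coalgebra.counit (R := k) (ρ.left j) • ((1 : A) ⊗ₜ[k] ρ.right j) := by
    intro j _
    rw [← TensorProduct.sum_tmul, sum_antipode_mul_eq_smul (σ j), TensorProduct.smul_tmul']
  rw [Finset.sum_congr rfl step]
  simp_rw [← TensorProduct.tmul_smul]
  rw [← TensorProduct.tmul_sum, sum_counit_smul' ρ]

lemma comul_antipode' :
    (Coalgebra.comul (R := k) (A := A)) ∘ₗ (antipode (R := k) (A := A))
      = (TensorProduct.map (antipode (R := k)) (antipode (R := k))) ∘ₗ
          (TensorProduct.comm k A A).toLinearMap ∘ₗ (Coalgebra.comul (R := k) (A := A)) := by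
  set S : A →ₗ[k] A := antipode (R := k) (A := A) with hS
  set Δ : A →ₗ[k] A ⊗[k] A := Coalgebra.comul (R := k) (A := A) with hΔ
  refine (conv_inv_unique (f := Δ) ?_ ?_).symm
  · -- conv Δ (SS ∘ τ ∘ Δ) = convUnit
    ext a
    set r := ℛ k a with hr
    set r2 : ∀ i, Coalgebra.Repr k (r.right i) (A × A) := fun i => ℛ k (r.right i) with hr2
    set l2 : ∀ i, Coalgebra.Repr k (r.left i) (A × A) := fun i => ℛ k (r.left i) with hl2
    set d : ∀ i j, Coalgebra.Repr k ((l2 i).left j) (A × A) := fun i j => ℛ k ((l2 i).left j) with hd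
    rw [conv_repr _ _ r]
    have happ : ∀ i ∈ r.index,
        Δ (r.left i) * (TensorProduct.map S S ∘ₗ (TensorProduct.comm k A A).toLinearMap ∘ₗ Δ)
            (r.right i)
        = ∑ j ∈ (r2 i).index,
            Δ (r.left i) * (S ((r2 i).right j) ⊗ₜ[k] S ((r2 i).left j)) := by
      intro i _
      rw [LinearMap.comp_apply, LinearMap.comp_apply, LinearEquiv.coe_coe, ← (r2 i).eq,
        map_sum, map_sum, Finset.mul_sum]
      exact Finset.sum_congr rfl fun j _ => by rw [TensorProduct.comm_tmul,
        TensorProduct.map_tmul]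
    rw [Finset.sum_congr rfl happ]
    have key := Coalgebra.sum_tmul_tmul_eq r l2 r2
    apply_fun (LinearMap.mul' k (A ⊗[k] A) ∘ₗ TensorProduct.map Δ
        (TensorProduct.map S S ∘ₗ (TensorProduct.comm k A A).toLinearMap)) at key
    simp only [map_sum, LinearMap.coe_comp, Function.comp_apply, TensorProduct.map_tmul,
      LinearEquiv.coe_coe, TensorProduct.comm_tmul, LinearMap.mul'_apply] at key
    rw [← key]
    have inner : ∀ i ∈ r.index,
        ∑ j ∈ (l2 i).index, Δ ((l2 i).left j) * (S (r.right i) ⊗ₜ[k] S ((l2 i).right j))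
        = (r.left i * S (r.right i)) ⊗ₜ[k] (1 : A) := by
      intro i _
      calc ∑ j ∈ (l2 i).index, Δ ((l2 i).left j) * (S (r.right i) ⊗ₜ[k] S ((l2 i).right j))
          = ∑ j ∈ (l2 i).index, (∑ p ∈ (d i j).index,
              (d i j).left p ⊗ₜ[k] ((d i j).right p * S ((l2 i).right j))) *
              (S (r.right i) ⊗ₜ[k] (1 : A)) := by
            refine Finset.sum_congr rfl fun j _ => ?_
            rw [← (d i j).eq, Finset.sum_mul, Finset.sum_mul]
            refine Finset.sum_congr rfl fun p _ => ?_
            rw [Algebra.TensorProduct.tmul_mul_tmul, Algebra.TensorProduct.tmul_mul_tmul,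
              mul_one]
        _ = (∑ j ∈ (l2 i).index, ∑ p ∈ (d i j).index,
              (d i j).left p ⊗ₜ[k] ((d i j).right p * S ((l2 i).right j))) *
              (S (r.right i) ⊗ₜ[k] (1 : A)) := by rw [Finset.sum_mul]
        _ = (r.left i ⊗ₜ[k] (1 : A)) * (S (r.right i) ⊗ₜ[k] (1 : A)) := by
            rw [lemX (l2 i) (d i)]
        _ = (r.left i * S (r.right i)) ⊗ₜ[k] (1 : A) := by
            rw [Algebra.TensorProduct.tmul_mul_tmul, mul_one]
    rw [Finset.sum_congr rfl inner, ← TensorProduct.sum_tmul, sum_mul_antipode_eq_algebraMap_counit r]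
    rw [convUnit_apply, Algebra.TensorProduct.algebraMap_apply]
  · -- conv (Δ ∘ S) Δ = convUnit
    ext a
    rw [conv_repr _ _ (ℛ k a)]
    have step : ∀ i ∈ (ℛ k a).index,
        (Δ ∘ₗ S) ((ℛ k a).left i) * Δ ((ℛ k a).right i)
        = Δ (S ((ℛ k a).left i) * (ℛ k a).right i) := by
      intro i _
      rw [LinearMap.comp_apply, ← Bialgebra.comul_mul]
    rw [Finset.sum_congr rfl step, ← map_sum, sum_antipode_mul_eq_algebraMap_counit (ℛ k a)]
    rw [convUnit_apply, Bialgebra.comul_algebraMap]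

lemma comul_antipode_apply (c : A) :
    Coalgebra.comul (R := k) (antipode (R := k) c)
      = (TensorProduct.map (antipode (R := k)) (antipode (R := k)))
          ((TensorProduct.comm k A A) (Coalgebra.comul (R := k) c)) := by
  have := LinearMap.congr_fun (comul_antipode' (k := k) (A := A)) c
  simpa using this

end HopfAux
section MainProof

open Coalgebra HopfAlgebra

set_option maxHeartbeats 2000000 in
/-- `Δ(Q) = (S⊗S)(ψ₂₁^{-1})·(Q⊗Q)·ψ^{-1}` for `Q = Σ S(ψ¹)ψ²`. -/
theorem comul_Qpsi (k A : Type*) [Field k] [CommRing A] [HopfAlgebra k A]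
    (ψ ψ' : A ⊗[k] A) (hψ : IsDrinfeldTwist k ψ)
    (h1 : ψ * ψ' = 1) (h2 : ψ' * ψ = 1)
    (Q : A) (hQ : Q = LinearMap.mul' k A
      ((LinearMap.rTensor A (HopfAlgebra.antipode (R := k))) ψ)) :
    Coalgebra.comul (R := k) Q =
      (TensorProduct.map (HopfAlgebra.antipode (R := k)) (HopfAlgebra.antipode (R := k)))
          ((TensorProduct.comm k A A) ψ') * (Q ⊗ₜ[k] Q) * ψ' := by
  obtain ⟨-, hcoc, hl, -⟩ := hψ
  classical
  set S : A →ₗ[k] A := HopfAlgebra.antipode (R := k) (A := A) with hSdef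
  set Δ : A →ₗ[k] A ⊗[k] A := Coalgebra.comul (R := k) (A := A) with hΔdef
  -- local restatements of the Hopf algebra facts, in terms of `S` and `Δ`
  have hSmul : ∀ a b : A, S (a * b) = S a * S b := fun a b => antipode_mul' a b
  have hΔmul : ∀ a b : A, Δ (a * b) = Δ a * Δ b := fun a b => Bialgebra.comul_mul a b
  have hΔS : ∀ c : A,
      Δ (S c) = TensorProduct.map S S ((TensorProduct.comm k A A) (Δ c)) := fun c =>
    comul_antipode_apply c
  have hSam : ∀ (c : A) (r : Coalgebra.Repr k c (A × A)),
      ∑ j ∈ r.index, S (r.left j) * r.right j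
        = Coalgebra.counit (R := k) c • (1 : A) := fun c r => sum_antipode_mul_eq_smul r
  have hG : ∀ (c : A) (r : Coalgebra.Repr k c (A × A)),
      ∑ j ∈ r.index, ((S (r.left j)) ⊗ₜ[k] (1 : A)) * Δ (r.right j)
        = (1 : A) ⊗ₜ[k] c := fun c r => lemG r
  -- the algebra hom `γ = (S ⊗ S) ∘ τ`
  set γ : (A ⊗[k] A) →ₐ[k] (A ⊗[k] A) :=
    ((Algebra.TensorProduct.map (antipodeAlgHom' k A) (antipodeAlgHom' k A)).comp
      (Algebra.TensorProduct.comm k A A).toAlgHom) with hγ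
  have γapp : ∀ w : A ⊗[k] A,
      γ w = TensorProduct.map S S ((TensorProduct.comm k A A) w) := by
    intro w
    induction w using TensorProduct.induction_on with
    | zero => simp
    | tmul x y => simp [hγ, antipodeAlgHom', hSdef]
    | add u v hu hv => rw [map_add, map_add, map_add, hu, hv]
  have hinv2 : γ ψ * γ ψ' = 1 := by rw [← map_mul, h1, map_one]
  -- a finite representation of ψ
  obtain ⟨T, hT⟩ := TensorProduct.exists_finset (R := k) ψ
  set R1 : (q : A × A) → Coalgebra.Repr k q.1 (A × A) := fun q => ℛ k q.1 with hR1
  set R2 : (q : A × A) → Coalgebra.Repr k q.2 (A × A) := fun q => ℛ k q.2 with hR2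
  have hEq1 : ∀ q : A × A,
      ∑ j ∈ (R1 q).index, (R1 q).left j ⊗ₜ[k] (R1 q).right j = Δ q.1 := fun q => (R1 q).eq
  have hEq2 : ∀ q : A × A,
      ∑ j ∈ (R2 q).index, (R2 q).left j ⊗ₜ[k] (R2 q).right j = Δ q.2 := fun q => (R2 q).eq
  have hQsum : Q = ∑ p ∈ T, S p.1 * p.2 := by
    rw [hQ, hT, map_sum, map_sum]
    exact Finset.sum_congr rfl fun p _ => by
      rw [LinearMap.rTensor_tmul, LinearMap.mul'_apply]
  have hε1 : ∑ q ∈ T, Coalgebra.counit (R := k) q.1 • q.2 = 1 := by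
    rw [← hl, hT, map_sum, map_sum]
    exact (Finset.sum_congr rfl fun q _ => by
      rw [LinearMap.rTensor_tmul, TensorProduct.lid_tmul]).symm
  -- expansions of the two sides of the cocycle identity
  have hT1 : LinearMap.rTensor A Δ ψ = ∑ q ∈ T, ∑ j ∈ (R1 q).index,
      ((R1 q).left j ⊗ₜ[k] (R1 q).right j) ⊗ₜ[k] q.2 := by
    rw [hT, map_sum]
    exact Finset.sum_congr rfl fun q _ => by
      rw [LinearMap.rTensor_tmul, ← hEq1 q, TensorProduct.sum_tmul]
  have hT2 : LinearMap.lTensor A Δ ψ = ∑ q ∈ T, ∑ j ∈ (R2 q).index,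
      q.1 ⊗ₜ[k] ((R2 q).left j ⊗ₜ[k] (R2 q).right j) := by
    rw [hT, map_sum]
    exact Finset.sum_congr rfl fun q _ => by
      rw [LinearMap.lTensor_tmul, ← hEq2 q, TensorProduct.tmul_sum]
  have eL : (Algebra.TensorProduct.assoc k k k A A A)
        ((LinearMap.rTensor A Δ) ψ * (ψ ⊗ₜ[k] (1 : A)))
      = ∑ p ∈ T, ∑ q ∈ T, ∑ j ∈ (R1 q).index,
          ((R1 q).left j * p.1) ⊗ₜ[k] (((R1 q).right j * p.2) ⊗ₜ[k] q.2) := by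
    rw [hT1, show ψ ⊗ₜ[k] (1 : A) = ∑ p ∈ T, (p.1 ⊗ₜ[k] p.2) ⊗ₜ[k] (1 : A) by
      rw [hT, TensorProduct.sum_tmul]]
    simp only [Finset.sum_mul, Finset.mul_sum, map_sum,
      Algebra.TensorProduct.tmul_mul_tmul, mul_one, Algebra.TensorProduct.assoc_tmul]
  have eR : (LinearMap.lTensor A Δ) ψ * ((1 : A) ⊗ₜ[k] ψ)
      = ∑ p ∈ T, ∑ q ∈ T, ∑ j ∈ (R2 q).index,
          q.1 ⊗ₜ[k] (((R2 q).left j * p.1) ⊗ₜ[k] ((R2 q).right j * p.2)) := by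
    rw [hT2, show (1 : A) ⊗ₜ[k] ψ = ∑ p ∈ T, (1 : A) ⊗ₜ[k] (p.1 ⊗ₜ[k] p.2) by
      rw [hT, TensorProduct.tmul_sum]]
    simp only [Finset.sum_mul, Finset.mul_sum,
      Algebra.TensorProduct.tmul_mul_tmul, mul_one, one_mul]
  have hcoc' : (∑ q ∈ T, ∑ j ∈ (R1 q).index, ∑ p ∈ T,
          ((R1 q).left j * p.1) ⊗ₜ[k] (((R1 q).right j * p.2) ⊗ₜ[k] q.2))
      = ∑ q ∈ T, ∑ j ∈ (R2 q).index, ∑ p ∈ T,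
          q.1 ⊗ₜ[k] (((R2 q).left j * p.1) ⊗ₜ[k] ((R2 q).right j * p.2)) := by
    have e := hcoc
    rw [eL, eR] at e
    calc ∑ q ∈ T, ∑ j ∈ (R1 q).index, ∑ p ∈ T,
          ((R1 q).left j * p.1) ⊗ₜ[k] (((R1 q).right j * p.2) ⊗ₜ[k] q.2)
        = ∑ q ∈ T, ∑ p ∈ T, ∑ j ∈ (R1 q).index,
          ((R1 q).left j * p.1) ⊗ₜ[k] (((R1 q).right j * p.2) ⊗ₜ[k] q.2) :=
          Finset.sum_congr rfl fun q _ => Finset.sum_comm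
      _ = ∑ p ∈ T, ∑ q ∈ T, ∑ j ∈ (R1 q).index,
          ((R1 q).left j * p.1) ⊗ₜ[k] (((R1 q).right j * p.2) ⊗ₜ[k] q.2) :=
          Finset.sum_comm
      _ = ∑ p ∈ T, ∑ q ∈ T, ∑ j ∈ (R2 q).index,
          q.1 ⊗ₜ[k] (((R2 q).left j * p.1) ⊗ₜ[k] ((R2 q).right j * p.2)) := e
      _ = ∑ q ∈ T, ∑ p ∈ T, ∑ j ∈ (R2 q).index,
          q.1 ⊗ₜ[k] (((R2 q).left j * p.1) ⊗ₜ[k] ((R2 q).right j * p.2)) :=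
          Finset.sum_comm
      _ = ∑ q ∈ T, ∑ j ∈ (R2 q).index, ∑ p ∈ T,
          q.1 ⊗ₜ[k] (((R2 q).left j * p.1) ⊗ₜ[k] ((R2 q).right j * p.2)) :=
          Finset.sum_congr rfl fun q _ => Finset.sum_comm
  -- the two linear maps through which we push the cocycle identity
  set Φ : A ⊗[k] (A ⊗[k] A) →ₗ[k] A ⊗[k] A :=
    LinearMap.mul' k (A ⊗[k] A) ∘ₗ
      TensorProduct.map (TensorProduct.map S S ∘ₗ (TensorProduct.comm k A A).toLinearMap) Δ ∘ₗ
      (TensorProduct.assoc k A A A).symm.toLinearMap with hΦdef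
  set Ψ : A ⊗[k] (A ⊗[k] A) →ₗ[k] A ⊗[k] A :=
    LinearMap.rTensor A (LinearMap.mul' k A ∘ₗ LinearMap.rTensor A S) ∘ₗ
      (TensorProduct.assoc k A A A).symm.toLinearMap with hΨdef
  have Φapp : ∀ x y z : A, Φ (x ⊗ₜ[k] (y ⊗ₜ[k] z)) = (S y ⊗ₜ[k] S x) * Δ z := by
    intro x y z
    simp [hΦdef, LinearMap.mul'_apply]
  have Ψapp : ∀ x y z : A, Ψ (x ⊗ₜ[k] (y ⊗ₜ[k] z)) = (S x * y) ⊗ₜ[k] z := by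
    intro x y z
    simp [hΨdef, LinearMap.mul'_apply]
  have hΦ := congrArg Φ hcoc'
  have hΨ := congrArg Ψ hcoc'
  simp only [map_sum, Φapp] at hΦ
  simp only [map_sum, Ψapp] at hΨ
  set K : A ⊗[k] A := ∑ p ∈ T, (S p.1 ⊗ₜ[k] (1 : A)) * Δ p.2 with hK
  set W : A ⊗[k] A := ∑ p ∈ T, S p.2 ⊗ₜ[k] S p.1 with hWdef
  -- evaluation (1) : ΨL = Q ⊗ 1
  have ev1 : (∑ q ∈ T, ∑ j ∈ (R1 q).index, ∑ p ∈ T,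
        (S ((R1 q).left j * p.1) * ((R1 q).right j * p.2)) ⊗ₜ[k] q.2)
      = Q ⊗ₜ[k] (1 : A) := by
    have inner : ∀ q ∈ T, ∑ j ∈ (R1 q).index, ∑ p ∈ T,
        (S ((R1 q).left j * p.1) * ((R1 q).right j * p.2)) ⊗ₜ[k] q.2
        = Coalgebra.counit (R := k) q.1 • (Q ⊗ₜ[k] q.2) := by
      intro q _
      have e1 : ∀ j ∈ (R1 q).index, ∑ p ∈ T,
          (S ((R1 q).left j * p.1) * ((R1 q).right j * p.2)) ⊗ₜ[k] q.2
          = ((S ((R1 q).left j) * (R1 q).right j) * Q) ⊗ₜ[k] q.2 := by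
        intro j _
        rw [← TensorProduct.sum_tmul]
        congr 1
        rw [hQsum, Finset.mul_sum]
        exact Finset.sum_congr rfl fun p _ => by rw [hSmul]; ring
      rw [Finset.sum_congr rfl e1, ← TensorProduct.sum_tmul, ← Finset.sum_mul,
        hSam q.1 (R1 q), smul_mul_assoc, one_mul, ← TensorProduct.smul_tmul']
    rw [Finset.sum_congr rfl inner]
    rw [Finset.sum_congr rfl fun q _ => (TensorProduct.tmul_smul
      (Coalgebra.counit (R := k) q.1) Q q.2).symm, ← TensorProduct.tmul_sum, hε1]
  -- evaluation (2) : ΨR = K * ψ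
  have ev2 : (∑ q ∈ T, ∑ j ∈ (R2 q).index, ∑ p ∈ T,
        (S q.1 * ((R2 q).left j * p.1)) ⊗ₜ[k] ((R2 q).right j * p.2))
      = K * ψ := by
    have inner : ∀ q ∈ T, ∑ j ∈ (R2 q).index, ∑ p ∈ T,
        (S q.1 * ((R2 q).left j * p.1)) ⊗ₜ[k] ((R2 q).right j * p.2)
        = ((S q.1 ⊗ₜ[k] (1 : A)) * Δ q.2) * ψ := by
      intro q _
      have e1 : ∀ j ∈ (R2 q).index, ∑ p ∈ T,
          (S q.1 * ((R2 q).left j * p.1)) ⊗ₜ[k] ((R2 q).right j * p.2)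
          = ((S q.1 * (R2 q).left j) ⊗ₜ[k] (R2 q).right j) * ψ := by
        intro j _
        rw [hT, Finset.mul_sum]
        exact Finset.sum_congr rfl fun p _ => by
          rw [Algebra.TensorProduct.tmul_mul_tmul, mul_assoc]
      rw [Finset.sum_congr rfl e1, ← Finset.sum_mul]
      congr 1
      rw [← hEq2 q, Finset.mul_sum]
      exact Finset.sum_congr rfl fun j _ => by
        rw [Algebra.TensorProduct.tmul_mul_tmul, one_mul]
    rw [Finset.sum_congr rfl inner, ← Finset.sum_mul, hK]
  -- evaluation (3) : ΦL = Δ Q * W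
  have hΔQ : Δ Q = ∑ q ∈ T, ∑ j ∈ (R1 q).index,
      (S ((R1 q).right j) ⊗ₜ[k] S ((R1 q).left j)) * Δ q.2 := by
    rw [hQsum, map_sum]
    refine Finset.sum_congr rfl fun q _ => ?_
    rw [hΔmul, hΔS, ← hEq1 q, map_sum, map_sum, Finset.sum_mul]
    exact Finset.sum_congr rfl fun j _ => by
      rw [TensorProduct.comm_tmul, TensorProduct.map_tmul]
  have ev3 : (∑ q ∈ T, ∑ j ∈ (R1 q).index, ∑ p ∈ T,
        (S ((R1 q).right j * p.2) ⊗ₜ[k] S ((R1 q).left j * p.1)) * Δ q.2)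
      = Δ Q * W := by
    rw [hΔQ, Finset.sum_mul]
    refine Finset.sum_congr rfl fun q _ => ?_
    rw [Finset.sum_mul]
    refine Finset.sum_congr rfl fun j _ => ?_
    rw [hWdef, Finset.mul_sum]
    refine Finset.sum_congr rfl fun p _ => ?_
    rw [hSmul, hSmul, show (S ((R1 q).right j) * S p.2) ⊗ₜ[k] (S ((R1 q).left j) * S p.1)
      = (S ((R1 q).right j) ⊗ₜ[k] S ((R1 q).left j)) * (S p.2 ⊗ₜ[k] S p.1) from
      (Algebra.TensorProduct.tmul_mul_tmul _ _ _ _).symm]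
    ring
  -- evaluation (4) : ΦR = (1 ⊗ Q) * K
  have ev4 : (∑ q ∈ T, ∑ j ∈ (R2 q).index, ∑ p ∈ T,
        (S ((R2 q).left j * p.1) ⊗ₜ[k] S q.1) * Δ ((R2 q).right j * p.2))
      = ((1 : A) ⊗ₜ[k] Q) * K := by
    have inner : ∀ q ∈ T, ∑ j ∈ (R2 q).index, ∑ p ∈ T,
        (S ((R2 q).left j * p.1) ⊗ₜ[k] S q.1) * Δ ((R2 q).right j * p.2)
        = (((1 : A) ⊗ₜ[k] (S q.1 * q.2))) * K := by
      intro q _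
      have e1 : ∀ j ∈ (R2 q).index, ∑ p ∈ T,
          (S ((R2 q).left j * p.1) ⊗ₜ[k] S q.1) * Δ ((R2 q).right j * p.2)
          = (((S ((R2 q).left j) ⊗ₜ[k] (1 : A)) * Δ ((R2 q).right j)) *
              ((1 : A) ⊗ₜ[k] S q.1)) * K := by
        intro j _
        rw [hK, Finset.mul_sum]
        refine Finset.sum_congr rfl fun p _ => ?_
        rw [hSmul, hΔmul,
          show (S ((R2 q).left j) * S p.1) ⊗ₜ[k] S q.1
            = (S ((R2 q).left j) ⊗ₜ[k] (1 : A)) * ((1 : A) ⊗ₜ[k] S q.1) *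
              (S p.1 ⊗ₜ[k] (1 : A)) from by
            rw [Algebra.TensorProduct.tmul_mul_tmul, Algebra.TensorProduct.tmul_mul_tmul]
            simp only [mul_one, one_mul]]
        ring
      rw [Finset.sum_congr rfl e1, ← Finset.sum_mul, ← Finset.sum_mul, hG q.2 (R2 q),
        Algebra.TensorProduct.tmul_mul_tmul, one_mul, mul_comm q.2 (S q.1)]
    rw [Finset.sum_congr rfl inner, ← Finset.sum_mul, ← TensorProduct.tmul_sum, ← hQsum]
  rw [ev3, ev4] at hΦ
  rw [ev1, ev2] at hΨ
  have hWγ : W = γ ψ := by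
    rw [γapp, hT, map_sum, map_sum, hWdef]
    exact Finset.sum_congr rfl fun p _ => by
      rw [TensorProduct.comm_tmul, TensorProduct.map_tmul]
  have hQQ : ((1 : A) ⊗ₜ[k] Q) * (Q ⊗ₜ[k] (1 : A)) = Q ⊗ₜ[k] Q := by
    rw [Algebra.TensorProduct.tmul_mul_tmul, one_mul, mul_one]
  rw [← γapp ψ']
  calc Δ Q = (Δ Q * (γ ψ * γ ψ')) * (ψ * ψ') := by rw [hinv2, h1, mul_one, mul_one]
    _ = ((Δ Q * W) * ψ) * (γ ψ' * ψ') := by rw [hWγ]; ring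
    _ = (((1 : A) ⊗ₜ[k] Q) * (K * ψ)) * (γ ψ' * ψ') := by rw [hΦ]; ring
    _ = (((1 : A) ⊗ₜ[k] Q) * (Q ⊗ₜ[k] (1 : A))) * (γ ψ' * ψ') := by rw [← hΨ]
    _ = γ ψ' * (Q ⊗ₜ[k] Q) * ψ' := by rw [hQQ]; ring

end MainProof
end

section
/- Let ι^♯ : O(G) → O(H) be a surjective homomorphism of commutative Hopf algebras, Ψ ∈ O(G)⊗O(G) a Drinfeld twist, and ψ := (ι^♯⊗ι^♯)(Ψ). Then the linear map ρ_Ψ : O(G) → O(G) ⊗ O(H)_ψ, f ↦ Σ f₁Ψ¹ ⊗ ι^♯(f₂Ψ²), is coassociative and counital for the twisted comultiplication Δ_ψ on O(H)_ψ: (ρ_Ψ ⊗ id)∘ρ_Ψ = (id ⊗ Δ_ψ)∘ρ_Ψ and (id ⊗ ε)∘ρ_Ψ = id. That is, ρ_Ψ makes O(G) a right O(H)_ψ-comodule. -/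
open TensorProduct

section Aux
variable {k : Type*} [CommRing k] {R S T U : Type*} [CommRing R] [CommRing S] [CommRing T]
  [CommRing U] [Algebra k R] [Algebra k S] [Algebra k T] [Algebra k U]

lemma aux_map_eq (f : R →ₐ[k] S) (g : T →ₐ[k] U) (z : R ⊗[k] T) :
    TensorProduct.map f.toLinearMap g.toLinearMap z = Algebra.TensorProduct.map f g z := by
  induction z using TensorProduct.induction_on with
  | zero => simp
  | tmul a b => rfl
  | add x y hx hy => simp [hx, hy]

lemma aux_map_mul (f : R →ₐ[k] S) (g : T →ₐ[k] U) (x y : R ⊗[k] T) :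
    TensorProduct.map f.toLinearMap g.toLinearMap (x * y)
      = TensorProduct.map f.toLinearMap g.toLinearMap x
        * TensorProduct.map f.toLinearMap g.toLinearMap y := by
  rw [aux_map_eq, aux_map_eq, aux_map_eq, map_mul]

lemma aux_rTensor_mulRight (w : R) (z : R ⊗[k] S) :
    LinearMap.rTensor S (LinearMap.mulRight k w) z = z * (w ⊗ₜ[k] 1) := by
  induction z using TensorProduct.induction_on with
  | zero => simp
  | tmul a b => simp [Algebra.TensorProduct.tmul_mul_tmul]
  | add x y hx hy => simp [hx, hy, add_mul]

lemma aux_lTensor_mulRight (w : S) (z : R ⊗[k] S) :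
    LinearMap.lTensor R (LinearMap.mulRight k w) z = z * ((1 : R) ⊗ₜ[k] w) := by
  induction z using TensorProduct.induction_on with
  | zero => simp
  | tmul a b => simp [Algebra.TensorProduct.tmul_mul_tmul]
  | add x y hx hy => simp [hx, hy, add_mul]

lemma aux_rid_eq (z : R ⊗[k] k) :
    TensorProduct.rid k R z = Algebra.TensorProduct.rid k k R z := by
  rw [← TensorProduct.AlgebraTensorModule.rid_eq_rid]; rfl

lemma aux_rid_mul (x y : R ⊗[k] k) :
    TensorProduct.rid k R (x * y) = TensorProduct.rid k R x * TensorProduct.rid k R y := by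
  rw [aux_rid_eq, aux_rid_eq, aux_rid_eq, map_mul]

lemma aux_assoc_eq (z : (R ⊗[k] S) ⊗[k] T) :
    TensorProduct.assoc k R S T z = Algebra.TensorProduct.assoc k k k R S T z := rfl

lemma aux_assoc_mul (x y : (R ⊗[k] S) ⊗[k] T) :
    TensorProduct.assoc k R S T (x * y)
      = TensorProduct.assoc k R S T x * TensorProduct.assoc k R S T y := by
  rw [aux_assoc_eq, aux_assoc_eq, aux_assoc_eq, map_mul]

end Aux

section Aux2
variable {k : Type*} [CommRing k] {R : Type*} [CommRing R] [Bialgebra k R]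

lemma aux_rTensor_comul_mul (x y : R ⊗[k] R) :
    LinearMap.rTensor R (Coalgebra.comul (R := k) (A := R)) (x * y)
      = LinearMap.rTensor R (Coalgebra.comul (R := k)) x
        * LinearMap.rTensor R (Coalgebra.comul (R := k)) y :=
  aux_map_mul (Bialgebra.comulAlgHom k R) (AlgHom.id k R) x y

lemma aux_lTensor_comul_mul (x y : R ⊗[k] R) :
    LinearMap.lTensor R (Coalgebra.comul (R := k) (A := R)) (x * y)
      = LinearMap.lTensor R (Coalgebra.comul (R := k)) x
        * LinearMap.lTensor R (Coalgebra.comul (R := k)) y :=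
  aux_map_mul (AlgHom.id k R) (Bialgebra.comulAlgHom k R) x y

lemma aux_lTensor_counit_mul (x y : R ⊗[k] R) :
    LinearMap.lTensor R (Coalgebra.counit (R := k) (A := R)) (x * y)
      = LinearMap.lTensor R (Coalgebra.counit (R := k)) x
        * LinearMap.lTensor R (Coalgebra.counit (R := k)) y :=
  aux_map_mul (AlgHom.id k R) (Bialgebra.counitAlgHom k R) x y

end Aux2


/-- `ρ_Ψ(f) = Σ f₁Ψ¹ ⊗ ι^♯(f₂Ψ²)` makes `O(G)` a right
`O(H)_ψ`-comodule (coassociative and counital for `Δ_ψ`). -/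
theorem rhoPsi_comodule (k A B : Type*) [Field k] [CommRing A] [HopfAlgebra k A]
    [CommRing B] [HopfAlgebra k B]
    (π : A →ₐc[k] B) (hπ : Function.Surjective π)
    (Ψ : A ⊗[k] A) (hΨ : IsDrinfeldTwist k Ψ)
    (ψ : B ⊗[k] B)
    (hψ : ψ = (TensorProduct.map π.toLinearMap π.toLinearMap) Ψ)
    (ρ : A →ₗ[k] A ⊗[k] B)
    (hρ : ρ = (LinearMap.lTensor A π.toLinearMap) ∘ₗ (LinearMap.mulRight k Ψ) ∘ₗ
      (Coalgebra.comul (R := k)))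
    (Δψ : B →ₗ[k] B ⊗[k] B)
    (hΔψ : Δψ = (LinearMap.mulRight k ψ) ∘ₗ (Coalgebra.comul (R := k))) :
    (∀ f : A,
      (TensorProduct.assoc k A B B) ((LinearMap.rTensor B ρ) (ρ f)) =
        (LinearMap.lTensor A Δψ) (ρ f)) ∧
    (∀ f : A,
      (TensorProduct.rid k A) ((LinearMap.lTensor A (Coalgebra.counit (R := k))) (ρ f)) = f) := by
  obtain ⟨-, hcoc, -, hcounit⟩ := hΨ
  set πl := π.toLinearMap with hπl
  set M : A →ₗ[k] A ⊗[k] A :=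
    (LinearMap.mulRight k Ψ) ∘ₗ (Coalgebra.comul (R := k)) with hM
  have hρ' : ρ = (LinearMap.lTensor A πl) ∘ₗ M := hρ
  have hMf : ∀ f : A, M f = Coalgebra.comul (R := k) f * Ψ := fun f => rfl
  -- the key untwisted identity
  have hK : ∀ f : A,
      TensorProduct.assoc k A A A (LinearMap.rTensor A M (M f))
        = LinearMap.lTensor A M (M f) := by
    intro f
    have h1 : LinearMap.rTensor A M (M f)
        = (LinearMap.rTensor A (Coalgebra.comul (R := k)) (Coalgebra.comul (R := k) f)
            * LinearMap.rTensor A (Coalgebra.comul (R := k)) Ψ) * (Ψ ⊗ₜ[k] (1 : A)) := by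
      rw [hM, LinearMap.rTensor_comp, LinearMap.comp_apply, LinearMap.comp_apply,
        aux_rTensor_mulRight, LinearMap.mulRight_apply, aux_rTensor_comul_mul]
    have h2 : LinearMap.lTensor A M (M f)
        = LinearMap.lTensor A (Coalgebra.comul (R := k)) (Coalgebra.comul (R := k) f)
            * (LinearMap.lTensor A (Coalgebra.comul (R := k)) Ψ * ((1 : A) ⊗ₜ[k] Ψ)) := by
      rw [hM, LinearMap.lTensor_comp, LinearMap.comp_apply, LinearMap.comp_apply,
        aux_lTensor_mulRight, LinearMap.mulRight_apply, aux_lTensor_comul_mul, mul_assoc]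
    rw [h1, h2, mul_assoc, aux_assoc_mul, Coalgebra.coassoc_apply, aux_assoc_eq, hcoc]
  -- compatibility of the twisted comultiplications with π
  have hcompat : (TensorProduct.map πl πl) ∘ₗ M = Δψ ∘ₗ πl := by
    ext a
    have h3 : TensorProduct.map πl πl (Coalgebra.comul (R := k) a)
        = Coalgebra.comul (R := k) (π a) := CoalgHomClass.map_comp_comul_apply π a
    have h4 : ∀ x y : A ⊗[k] A, TensorProduct.map πl πl (x * y)
        = TensorProduct.map πl πl x * TensorProduct.map πl πl y :=
      aux_map_mul (π : A →ₐ[k] B) (π : A →ₐ[k] B)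
    simp only [LinearMap.comp_apply, hMf, h4, h3, hΔψ, LinearMap.mulRight_apply, hψ]
    rfl
  constructor
  · intro f
    have hρf : ρ f = LinearMap.lTensor A πl (M f) := by rw [hρ']; rfl
    have hL : LinearMap.rTensor B ρ (ρ f)
        = TensorProduct.map (TensorProduct.map LinearMap.id πl) πl
            (LinearMap.rTensor A M (M f)) := by
      rw [hρf, ← LinearMap.comp_apply, LinearMap.rTensor_comp_lTensor, hρ']
      have : TensorProduct.map ((LinearMap.lTensor A πl) ∘ₗ M) πl
          = TensorProduct.map (LinearMap.lTensor A πl) πl ∘ₗ LinearMap.rTensor A M :=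
        TensorProduct.ext' fun a b => rfl
      rw [this]; rfl
    rw [hL, ← TensorProduct.map_map_assoc, hK, hρf]
    show LinearMap.lTensor A (TensorProduct.map πl πl) (LinearMap.lTensor A M (M f)) = _
    rw [← LinearMap.lTensor_comp_apply, hcompat, LinearMap.lTensor_comp_apply]
  · intro f
    have hρf : ρ f = LinearMap.lTensor A πl (M f) := by rw [hρ']; rfl
    rw [hρf, ← LinearMap.lTensor_comp_apply]
    have hc : (Coalgebra.counit (R := k) (A := B)) ∘ₗ πl = Coalgebra.counit (R := k) (A := A) :=
      CoalgHomClass.counit_comp π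
    rw [hc, hMf, aux_lTensor_counit_mul, aux_rid_mul, hcounit,
      Coalgebra.lTensor_counit_comul, mul_one]
    simp
end
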